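/- arXiv:1110.4966 — 3 statements merged into one kernel-verified Lean document; each statement's English description precedes it below -/
import Mathlib

section
/- Let A be a commutative Z-algebra, E an A-module with projective basis (e_i, x_i)_{i=1..n}, M the fundamental matrix with entries M_{ij} = x_i(e_j) ∈ A, and ∇ the connection ∇(δ)(e) = Σ_i δ(x_i(e))e_i. Then for all derivations δ, η ∈ Der_Z(A) the curvature R_∇(δ,η) = [∇(δ),∇(η)] − ∇([δ,η]), expressed in the generators e_1,...,e_n, equals the matrix commutator [δ(M), η(M)], where δ(M) is the matrix with entries δ(M_{ij}). -/
/-!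
The connection `∇` satisfies the Leibniz rule `∇(δ)(a • v) = δ a • v + a • ∇(δ) v`; this is
where `Σ x_i(v) e_i = v` enters. Applied to `∇(η)(e_k) = Σ_j η(M_jk) e_j` it gives
`∇(δ)∇(η)(e_k) = Σ_i (δ(η(M_ik)) + (δ(M) η(M))_ik) e_i`, and after antisymmetrising in `δ, η`
the second-order terms are exactly `∇([δ, η])(e_k)`.
-/

/-- The connection associated to a projective basis:
`∇(δ)(e) = Σ_i δ(x_i(e)) • e_i`. -/
def nab {Z A E : Type*} [CommRing Z] [CommRing A] [Algebra Z A]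
    [AddCommGroup E] [Module A E] {n : ℕ}
    (xb : Fin n → E →ₗ[A] A) (eb : Fin n → E)
    (δ : Derivation Z A A) (e : E) : E :=
  ∑ i, δ (xb i e) • eb i

section Connection

variable {Z A E : Type*} [CommRing Z] [CommRing A] [Algebra Z A]
  [AddCommGroup E] [Module A E] {n : ℕ} (xb : Fin n → E →ₗ[A] A) (eb : Fin n → E)

theorem nab_smul (hbasis : ∀ v : E, ∑ i, xb i v • eb i = v)
    (δ : Derivation Z A A) (a : A) (v : E) :
    nab xb eb δ (a • v) = δ a • v + a • nab xb eb δ v := by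
  conv_rhs => arg 1; rw [← hbasis v]
  simp only [nab, map_smul, smul_eq_mul, Derivation.leibniz, Finset.smul_sum, add_smul,
    Finset.sum_add_distrib, smul_smul, mul_comm, add_comm]

theorem nab_sum (δ : Derivation Z A A) {ι : Type*} (s : Finset ι) (v : ι → E) :
    nab xb eb δ (∑ j ∈ s, v j) = ∑ j ∈ s, nab xb eb δ (v j) := by
  simp only [nab, map_sum, Finset.sum_smul]
  exact Finset.sum_comm

theorem nab_apply_basis (δ : Derivation Z A A) (k : Fin n) :
    nab xb eb δ (eb k) = ∑ i, δ (xb i (eb k)) • eb i := rfl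

theorem nab_nab_apply_basis (hbasis : ∀ v : E, ∑ i, xb i v • eb i = v)
    (δ η : Derivation Z A A) (k : Fin n) :
    nab xb eb δ (nab xb eb η (eb k))
      = ∑ i, (δ (η (xb i (eb k)))
          + ((Matrix.of fun i j => δ (xb i (eb j))) * (Matrix.of fun i j => η (xb i (eb j))) :
              Matrix (Fin n) (Fin n) A) i k) • eb i := by
  simp only [nab_apply_basis, nab_sum, nab_smul xb eb hbasis, Finset.sum_add_distrib,
    add_smul, Matrix.mul_apply, Matrix.of_apply, Finset.sum_smul, Finset.smul_sum, smul_smul]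
  rw [Finset.sum_comm (s := Finset.univ) (t := Finset.univ)]
  simp only [mul_comm]

theorem nab_lie_apply_basis (δ η : Derivation Z A A) (k : Fin n) :
    nab xb eb ⁅δ, η⁆ (eb k) = ∑ i, (δ (η (xb i (eb k))) - η (δ (xb i (eb k)))) • eb i := rfl

end Connection

theorem stmt_13 {Z A E : Type*} [CommRing Z] [CommRing A] [Algebra Z A]
    [AddCommGroup E] [Module A E] {n : ℕ}
    (eb : Fin n → E) (xb : Fin n → E →ₗ[A] A)
    (hbasis : ∀ v : E, ∑ i, xb i v • eb i = v)
    (δ η : Derivation Z A A) (kk : Fin n) :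
    nab xb eb δ (nab xb eb η (eb kk)) - nab xb eb η (nab xb eb δ (eb kk))
        - nab xb eb ⁅δ, η⁆ (eb kk)
      = ∑ i,
          ((Matrix.of fun i j => δ (xb i (eb j))) * (Matrix.of fun i j => η (xb i (eb j)))
            - (Matrix.of fun i j => η (xb i (eb j))) * (Matrix.of fun i j => δ (xb i (eb j)))
            : Matrix (Fin n) (Fin n) A) i kk • eb i := by
  rw [nab_nab_apply_basis xb eb hbasis, nab_nab_apply_basis xb eb hbasis, nab_lie_apply_basis,
    ← Finset.sum_sub_distrib, ← Finset.sum_sub_distrib]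
  refine Finset.sum_congr rfl fun i _ => ?_
  rw [← sub_smul, ← sub_smul, Matrix.sub_apply]
  congr 1
  ring
end

section
/- Let K be a field of characteristic ≠ 2, A = K[x_1,x_2,x_3]/(x_1^2+x_2^2+x_3^2−1), Ω = Ω_{A/K} presented as A{dx_1,dx_2,dx_3}/(x_1dx_1+x_2dx_2+x_3dx_3), with projective basis induced by the section s(dx_i) = u_i − x_i G, G = x_1u_1+x_2u_2+x_3u_3. The fundamental matrix is M with M_{ij} = δ_{ij} − x_i x_j. Then for the derivations ∂̄_1 = x_2∂_1 − x_1∂_2 and ∂̄_2 = x_3∂_1 − x_1∂_3, the curvature of the associated connection is R_∇(∂̄_1,∂̄_2) = [∂̄_1(M), ∂̄_2(M)], and this matrix is the nonzero matrix with rows (0, x_1x_3, −x_1x_2), (−x_1x_3, 0, x_1^2), (x_1x_2, −x_1^2, 0) in A; in particular the connection ∇ is not flat. -/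
set_option synthInstance.maxHeartbeats 800000

noncomputable section
open MvPolynomial

/-- The coordinate ring of the 2-sphere `A = K[x_1,x_2,x_3]/(x_1^2+x_2^2+x_3^2-1)`. -/
abbrev Asph (K : Type*) [Field K] :=
  MvPolynomial (Fin 3) K ⧸
    Ideal.span {(X 0 ^ 2 + X 1 ^ 2 + X 2 ^ 2 - 1 : MvPolynomial (Fin 3) K)}

/-- The image of the variable `x_i` in `A`. -/
def xv (K : Type*) [Field K] (i : Fin 3) : Asph K :=
  Ideal.Quotient.mk _ (X i)

/-- The fundamental matrix `M` of the projective basis for `Ω_{A/K}` coming from the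
section `s(dx_i) = u_i - x_i G`:  `M_{ij} = δ_{ij} - x_i x_j`. -/
def Msph (K : Type*) [Field K] : Matrix (Fin 3) (Fin 3) (Asph K) :=
  Matrix.of fun i j => (if i = j then 1 else 0) - xv K i * xv K j

/-!
As a polynomial identity in `x`, the commutator `[∂̄_1(M), ∂̄_2(M)]` equals
`(x_1² + x_2² + x_3²)` times the claimed matrix, so the two agree on the sphere. The matrix is
nonzero because its entry `x_1²` is `1` at the point `(1,0,0)` of the sphere.
-/

open Matrix

/-- The derivative of `1 - x xᵀ` along a derivation sending `x` to `v`. -/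
def fundamentalMatrixDeriv {ι R : Type*} [CommRing R] (x v : ι → R) : Matrix ι ι R :=
  -(vecMulVec v x + vecMulVec x v)

theorem fundamentalMatrixDeriv_commutator {R : Type*} [CommRing R] (x : Fin 3 → R) :
    fundamentalMatrixDeriv x ![x 1, -x 0, 0] * fundamentalMatrixDeriv x ![x 2, 0, -x 0]
        - fundamentalMatrixDeriv x ![x 2, 0, -x 0] * fundamentalMatrixDeriv x ![x 1, -x 0, 0]
      = (x 0 ^ 2 + x 1 ^ 2 + x 2 ^ 2) •
          Matrix.of ![![0, x 0 * x 2, -(x 0 * x 1)],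
                      ![-(x 0 * x 2), 0, x 0 ^ 2],
                      ![x 0 * x 1, -(x 0 ^ 2), 0]] := by
  ext i j
  fin_cases i <;> fin_cases j <;>
    simp [fundamentalMatrixDeriv, Matrix.mul_apply, Fin.sum_univ_three, vecMulVec] <;> ring

section Sphere

variable (K : Type*) [Field K]

theorem xv_sq_add_sq_add_sq : xv K 0 ^ 2 + xv K 1 ^ 2 + xv K 2 ^ 2 = 1 := by
  rw [← sub_eq_zero]
  simp only [xv, ← map_pow, ← map_add, ← map_one (Ideal.Quotient.mk _), ← map_sub]
  exact Ideal.Quotient.eq_zero_iff_mem.mpr (Ideal.subset_span rfl)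

def evalSph (p : Fin 3 → K) (hp : p 0 ^ 2 + p 1 ^ 2 + p 2 ^ 2 = 1) : Asph K →+* K :=
  Ideal.Quotient.lift _ (eval p) fun f hf => by
    obtain ⟨g, rfl⟩ := Ideal.mem_span_singleton'.mp hf
    simp [hp]

theorem evalSph_xv (p : Fin 3 → K) (hp : p 0 ^ 2 + p 1 ^ 2 + p 2 ^ 2 = 1) (i : Fin 3) :
    evalSph K p hp (xv K i) = p i := by
  simp [evalSph, xv]

theorem xv_pow_ne_zero (i : Fin 3) (n : ℕ) : xv K i ^ n ≠ 0 := by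
  intro h
  let p : Fin 3 → K := Pi.single i 1
  have hp : p 0 ^ 2 + p 1 ^ 2 + p 2 ^ 2 = 1 := by
    fin_cases i <;> simp [p]
  have := congrArg (evalSph K p hp) h
  simp [evalSph_xv, p] at this

variable {K}

theorem map_Msph (δ : Derivation K (Asph K) (Asph K)) :
    (Msph K).map (fun a => δ a) = fundamentalMatrixDeriv (xv K) (fun i => δ (xv K i)) := by
  ext i j
  simp only [Msph, map_apply, of_apply, fundamentalMatrixDeriv, map_sub, Derivation.leibniz,
    smul_eq_mul]
  split_ifs <;> simp [vecMulVec_apply] <;> ring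

end Sphere

theorem stmt_16_general {K : Type*} [Field K]
    (δ1 δ2 : Derivation K (Asph K) (Asph K))
    (h11 : δ1 (xv K 0) = xv K 1) (h12 : δ1 (xv K 1) = - xv K 0)
    (h13 : δ1 (xv K 2) = 0)
    (h21 : δ2 (xv K 0) = xv K 2) (h22 : δ2 (xv K 1) = 0)
    (h23 : δ2 (xv K 2) = - xv K 0) :
    ((Msph K).map (fun a => δ1 a) * (Msph K).map (fun a => δ2 a)
        - (Msph K).map (fun a => δ2 a) * (Msph K).map (fun a => δ1 a)
      = Matrix.of ![![0, xv K 0 * xv K 2, -(xv K 0 * xv K 1)],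
                    ![-(xv K 0 * xv K 2), 0, xv K 0 ^ 2],
                    ![xv K 0 * xv K 1, -(xv K 0 ^ 2), 0]]) ∧
    ((Msph K).map (fun a => δ1 a) * (Msph K).map (fun a => δ2 a)
        - (Msph K).map (fun a => δ2 a) * (Msph K).map (fun a => δ1 a) ≠ 0) := by
  have hδ1 : (fun i => δ1 (xv K i)) = ![xv K 1, -xv K 0, 0] := by
    ext i; fin_cases i <;> simp [h11, h12, h13]
  have hδ2 : (fun i => δ2 (xv K i)) = ![xv K 2, 0, -xv K 0] := by
    ext i; fin_cases i <;> simp [h21, h22, h23]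
  have hcomm := fundamentalMatrixDeriv_commutator (xv K)
  rw [xv_sq_add_sq_add_sq, one_smul] at hcomm
  rw [map_Msph, map_Msph, hδ1, hδ2, hcomm]
  refine ⟨rfl, fun h => xv_pow_ne_zero K 0 2 ?_⟩
  simpa using congrFun (congrFun h 1) 2

theorem stmt_16 {K : Type*} [Field K] (h2 : (2 : K) ≠ 0)
    (δ1 δ2 : Derivation K (Asph K) (Asph K))
    (h11 : δ1 (xv K 0) = xv K 1) (h12 : δ1 (xv K 1) = - xv K 0)
    (h13 : δ1 (xv K 2) = 0)
    (h21 : δ2 (xv K 0) = xv K 2) (h22 : δ2 (xv K 1) = 0)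
    (h23 : δ2 (xv K 2) = - xv K 0) :
    ((Msph K).map (fun a => δ1 a) * (Msph K).map (fun a => δ2 a)
        - (Msph K).map (fun a => δ2 a) * (Msph K).map (fun a => δ1 a)
      = Matrix.of ![![0, xv K 0 * xv K 2, -(xv K 0 * xv K 1)],
                    ![-(xv K 0 * xv K 2), 0, xv K 0 ^ 2],
                    ![xv K 0 * xv K 1, -(xv K 0 ^ 2), 0]]) ∧
    ((Msph K).map (fun a => δ1 a) * (Msph K).map (fun a => δ2 a)
        - (Msph K).map (fun a => δ2 a) * (Msph K).map (fun a => δ1 a) ≠ 0) :=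
  stmt_16_general δ1 δ2 h11 h12 h13 h21 h22 h23
end
end

section
/- Let Z be a base ring, A a commutative Z-algebra, E an A-module with projective basis (e_i, x_i)_{i=1..n}, P^l the l-th module of principal parts with ∂^l(a) = class of 1⊗a, and ∇^l : E → P^l ⊗_A E defined by ∇^l(e) = Σ_i ∂^l(x_i(e)) ⊗ e_i. Then ∇^l is a differential operator of order ≤ l (i.e., all (l+1)-fold iterated commutators [···[∇^l, a_1]···, a_{l+1}] with multiplication operators vanish), and (p_l ⊗ id) ∘ ∇^l = ∇^{l−1}, where p_l : P^l → P^{l−1} is the canonical projection. -/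
set_option synthInstance.maxHeartbeats 1600000

open scoped TensorProduct

noncomputable section

/-- The kernel `I` of the multiplication map `A ⊗[Z] A → A`. -/
def Iker (Z A : Type*) [CommRing Z] [CommRing A] [Algebra Z A] : Ideal (A ⊗[Z] A) :=
  RingHom.ker (Algebra.TensorProduct.lmul' Z (S := A)).toRingHom

/-- The `m`-th-stage quotient `(A ⊗[Z] A)/I^m`; `P^l = PpartQ Z A (l+1)`. -/
abbrev PpartQ (Z A : Type*) [CommRing Z] [CommRing A] [Algebra Z A] (m : ℕ) :=
  (A ⊗[Z] A) ⧸ (Iker Z A ^ m)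

/-- `∂ : A → (A ⊗[Z] A)/I^m`, `a ↦ class of 1 ⊗ a`. -/
def delQ (Z A : Type*) [CommRing Z] [CommRing A] [Algebra Z A] (m : ℕ) (a : A) :
    PpartQ Z A m :=
  Ideal.Quotient.mk _ ((1 : A) ⊗ₜ[Z] a)

/-- The `l`-connection associated to a projective basis:
`∇^l(e) = Σ_i ∂^l(x_i(e)) ⊗ e_i ∈ P^l ⊗[A] E`. -/
def nablaL (Z : Type*) {A E : Type*} [CommRing Z] [CommRing A] [Algebra Z A]
    [AddCommGroup E] [Module A E] (m : ℕ) {n : ℕ}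
    (xb : Fin n → E →ₗ[A] A) (eb : Fin n → E) (e : E) :
    PpartQ Z A m ⊗[A] E :=
  ∑ i, delQ Z A m (xb i e) ⊗ₜ[A] eb i

/-- The commutator `[D, a]` of a map `D : E → P^l ⊗[A] E` with the multiplication
operator of `a ∈ A`. -/
def brktE (Z : Type*) {A E : Type*} [CommRing Z] [CommRing A] [Algebra Z A]
    [AddCommGroup E] [Module A E] (m : ℕ)
    (a : A) (D : E → PpartQ Z A m ⊗[A] E) : E → PpartQ Z A m ⊗[A] E :=
  fun e => D (a • e) - a • D e

/-! Commuting with `a` multiplies the coefficient of each term `[1 ⊗ x_i(e)] ⊗ e_i` of `∇^l(e)` by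
`1 ⊗ a - a ⊗ 1 ∈ I`, so an `(l+1)`-fold commutator has all its coefficients in `I^(l+1)` and
vanishes in `P^l`. The compatibility with `p_l` holds term by term. -/

theorem Ideal.list_prod_mem_pow_length {R : Type*} [CommRing R] {I : Ideal R} {l : List R}
    (hl : ∀ x ∈ l, x ∈ I) : l.prod ∈ I ^ l.length := by
  induction l with
  | nil => simp
  | cons x l ih =>
    rw [List.prod_cons, List.length_cons, pow_succ']
    exact Ideal.mul_mem_mul (hl x List.mem_cons_self)
      (ih fun y hy => hl y (List.mem_cons_of_mem x hy))

section PrincipalParts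

variable {Z A E : Type*} [CommRing Z] [CommRing A] [Algebra Z A]
    [AddCommGroup E] [Module A E]

theorem one_tmul_sub_tmul_one_mem_Iker (a : A) : (1 : A) ⊗ₜ[Z] a - a ⊗ₜ[Z] 1 ∈ Iker Z A := by
  simp [Iker, RingHom.mem_ker, Algebra.TensorProduct.lmul'_apply_tmul]

theorem smul_quotient_mk_eq_mk_tmul_one_mul (I : Ideal (A ⊗[Z] A)) (a : A) (q : A ⊗[Z] A) :
    a • Ideal.Quotient.mk I q = Ideal.Quotient.mk I (a ⊗ₜ[Z] 1 * q) :=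
  congrArg (Ideal.Quotient.mk _) (Algebra.smul_def a q)

variable (Z) in
def twistedNabla (m : ℕ) {n : ℕ} (xb : Fin n → E →ₗ[A] A) (eb : Fin n → E) (q : A ⊗[Z] A) (e : E) :
    PpartQ Z A m ⊗[A] E :=
  ∑ i, Ideal.Quotient.mk (Iker Z A ^ m) (q * (1 : A) ⊗ₜ[Z] xb i e) ⊗ₜ[A] eb i

variable {n : ℕ} (xb : Fin n → E →ₗ[A] A) (eb : Fin n → E) (m : ℕ)

theorem nablaL_eq_twistedNabla_one : nablaL Z m xb eb = twistedNabla Z m xb eb 1 := by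
  ext e
  simp [nablaL, twistedNabla, delQ]

theorem brktE_twistedNabla (a : A) (q : A ⊗[Z] A) :
    brktE Z m a (twistedNabla Z m xb eb q)
      = twistedNabla Z m xb eb (((1 : A) ⊗ₜ[Z] a - a ⊗ₜ[Z] 1) * q) := by
  ext e
  simp only [brktE, twistedNabla, Finset.smul_sum, ← Finset.sum_sub_distrib]
  refine Finset.sum_congr rfl fun i _ => ?_
  rw [TensorProduct.smul_tmul', smul_quotient_mk_eq_mk_tmul_one_mul, ← TensorProduct.sub_tmul,
    ← map_sub, map_smul, smul_eq_mul, ← one_mul (1 : A), ← Algebra.TensorProduct.tmul_mul_tmul,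
    one_mul]
  congr 2
  ring

theorem foldr_brktE_twistedNabla (as : List A) (q : A ⊗[Z] A) :
    as.foldr (brktE Z m) (twistedNabla Z m xb eb q)
      = twistedNabla Z m xb eb ((as.map fun a => (1 : A) ⊗ₜ[Z] a - a ⊗ₜ[Z] 1).prod * q) := by
  induction as with
  | nil => simp
  | cons a as ih =>
    rw [List.foldr_cons, ih, brktE_twistedNabla, List.map_cons, List.prod_cons, mul_assoc]

theorem list_prod_one_tmul_sub_tmul_one_mem_Iker_pow (as : List A) :
    (as.map fun a => (1 : A) ⊗ₜ[Z] a - a ⊗ₜ[Z] 1).prod ∈ Iker Z A ^ as.length := by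
  rw [← as.length_map (fun a => (1 : A) ⊗ₜ[Z] a - a ⊗ₜ[Z] 1)]
  refine Ideal.list_prod_mem_pow_length fun x hx => ?_
  obtain ⟨a, -, rfl⟩ := List.mem_map.mp hx
  exact one_tmul_sub_tmul_one_mem_Iker a

theorem twistedNabla_eq_zero_of_mem {q : A ⊗[Z] A} (hq : q ∈ Iker Z A ^ m) :
    twistedNabla Z m xb eb q = 0 := by
  ext e
  refine Finset.sum_eq_zero fun i _ => ?_
  rw [Ideal.Quotient.eq_zero_iff_mem.mpr (Ideal.mul_mem_right _ _ hq), TensorProduct.zero_tmul]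

theorem foldr_brktE_nablaL_eq_zero {as : List A} (hlen : as.length = m) :
    as.foldr (brktE Z m) (nablaL Z m xb eb) = 0 := by
  rw [nablaL_eq_twistedNabla_one, foldr_brktE_twistedNabla]
  refine twistedNabla_eq_zero_of_mem _ _ _ (Ideal.mul_mem_right _ _ ?_)
  exact hlen ▸ list_prod_one_tmul_sub_tmul_one_mem_Iker_pow as

end PrincipalParts

/-- `∇^l` is a differential operator of order `≤ l`, and `(p_l ⊗ id) ∘ ∇^l = ∇^{l-1}`
where `p_l : P^l → P^{l-1}` is the canonical projection. -/
theorem stmt_19 {Z A E : Type*} [CommRing Z] [CommRing A] [Algebra Z A]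
    [AddCommGroup E] [Module A E] {n : ℕ}
    (eb : Fin n → E) (xb : Fin n → E →ₗ[A] A)
    (l : ℕ) :
    (∀ as : List A, as.length = l + 1 → ∀ e : E,
        (as.foldr (brktE Z (l + 1)) (nablaL Z (l + 1) xb eb)) e = 0) ∧
    (∀ e : E,
        ∑ i, (Ideal.Quotient.factor (S := Iker Z A ^ (l + 1)) (T := Iker Z A ^ l)
                (Ideal.pow_le_pow_right (by omega))
                (delQ Z A (l + 1) (xb i e))) ⊗ₜ[A] eb i
          = nablaL Z l xb eb e) := by
  refine ⟨fun as hlen e => ?_, fun e => Finset.sum_congr rfl fun i _ => ?_⟩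
  · rw [foldr_brktE_nablaL_eq_zero xb eb (l + 1) hlen, Pi.zero_apply]
  · rw [delQ, Ideal.Quotient.factor_mk]
    rfl
end
end
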